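/- Let τ ∈ 𝔽_{q²} satisfy τ^q + τ = 1. If q ≥ 7, then no tuple (b₀, b₁, b₂, ε) ∈ 𝔽_{q²}⁴ \ {(0,0,0,0)} satisfies N(b₀,b₁,b₂,ε) = q, and some nonzero tuple satisfies N(b₀,b₁,b₂,ε) = q−1; hence the second minimum weight of the m = 3 code C_𝓛(𝙳,𝙶) equals q²−q. If moreover q ≥ 8, then the number of tuples (b₀, b₁, b₂, ε) ≠ (0,0,0,0) with N(b₀,b₁,b₂,ε) = q−1 is exactly (q+1)(q²−1). -/
import Mathlib


open Polynomial Finset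

private lemma aux_card_le {F : Type*} [Field F] [DecidableEq F] (s : Finset F) (P : F[X])
    (hP : P ≠ 0) (h : ∀ x ∈ s, P.eval x = 0) : s.card ≤ P.natDegree := by
  have hsub : s ⊆ P.roots.toFinset := by
    intro x hx
    exact Multiset.mem_toFinset.2 (Polynomial.mem_roots'.2 ⟨hP, h x hx⟩)
  calc s.card ≤ P.roots.toFinset.card := Finset.card_le_card hsub
    _ ≤ Multiset.card P.roots := P.roots.toFinset_card_le
    _ ≤ P.natDegree := P.card_roots'

private lemma aux_fiber {F : Type*} [Field F] [Fintype F] [DecidableEq F] (r s : ℕ)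
    (hr : 0 < r) (hs : 0 < s) (hrs : r * s = Fintype.card F - 1) :
    (Finset.univ.filter fun γ : F => γ ^ s = 1).card = s ∧
      ∀ γ : F, γ ^ s = 1 → (Finset.univ.filter fun x : F => x ^ r = γ).card = r := by
  classical
  set M : Finset F := Finset.univ.filter (fun γ : F => γ ^ s = 1) with hM
  have hM_le : M.card ≤ s := by
    have h1 : M.card ≤ ((X : F[X]) ^ s - C 1).natDegree := by
      refine aux_card_le M _ (X_pow_sub_C_ne_zero hs 1) ?_
      intro γ hγ
      rw [hM, Finset.mem_filter] at hγ
      simp [hγ.2]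
    rwa [natDegree_X_pow_sub_C] at h1
  have hfib_le : ∀ γ : F, (Finset.univ.filter fun x : F => x ^ r = γ).card ≤ r := by
    intro γ
    have h1 : (Finset.univ.filter fun x : F => x ^ r = γ).card
        ≤ ((X : F[X]) ^ r - C γ).natDegree := by
      refine aux_card_le _ _ (X_pow_sub_C_ne_zero hr γ) ?_
      intro x hx
      rw [Finset.mem_filter] at hx
      simp [hx.2]
    rwa [natDegree_X_pow_sub_C] at h1
  have hdisj : ∀ γ₁ ∈ M, ∀ γ₂ ∈ M, γ₁ ≠ γ₂ →
      Disjoint (Finset.univ.filter fun x : F => x ^ r = γ₁)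
        (Finset.univ.filter fun x : F => x ^ r = γ₂) := by
    intro γ₁ _ γ₂ _ hne
    rw [Finset.disjoint_left]
    intro x hx1 hx2
    rw [Finset.mem_filter] at hx1 hx2
    exact hne (hx1.2 ▸ hx2.2 ▸ rfl)
  have hsplit : (Finset.univ.filter fun x : F => x ≠ 0)
      = M.biUnion (fun γ => Finset.univ.filter fun x : F => x ^ r = γ) := by
    ext x
    simp only [Finset.mem_filter, Finset.mem_biUnion, Finset.mem_univ, true_and, hM]
    constructor
    · intro hx
      refine ⟨x ^ r, ?_, rfl⟩
      rw [← pow_mul, hrs]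
      exact FiniteField.pow_card_sub_one_eq_one x hx
    · rintro ⟨γ, hγ, hxr⟩
      intro hx0
      rw [hx0, zero_pow hr.ne'] at hxr
      rw [← hxr, zero_pow hs.ne'] at hγ
      exact zero_ne_one hγ
  have hsum : (∑ γ ∈ M, (Finset.univ.filter fun x : F => x ^ r = γ).card)
      = Fintype.card F - 1 := by
    rw [← Finset.card_biUnion hdisj, ← hsplit, Finset.filter_ne' Finset.univ 0,
      Finset.card_erase_of_mem (Finset.mem_univ 0), Finset.card_univ]
  have hMs : M.card = s := by
    refine le_antisymm hM_le ?_
    by_contra hcon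
    push_neg at hcon
    have h2 : (∑ γ ∈ M, (Finset.univ.filter fun x : F => x ^ r = γ).card) ≤ M.card * r := by
      have := Finset.sum_le_card_nsmul M _ r (fun γ _ => hfib_le γ)
      simpa using this
    have h3 : M.card * r < s * r := (Nat.mul_lt_mul_right hr).mpr hcon
    have h4 : Fintype.card F - 1 < s * r := lt_of_le_of_lt (hsum ▸ h2) h3
    rw [mul_comm s r, hrs] at h4
    exact lt_irrefl _ h4
  refine ⟨hMs, ?_⟩
  intro γ hγs
  have hγM : γ ∈ M := by rw [hM, Finset.mem_filter]; exact ⟨Finset.mem_univ _, hγs⟩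
  have h1 : (∑ γ' ∈ M.erase γ, (Finset.univ.filter fun x : F => x ^ r = γ').card)
      + (Finset.univ.filter fun x : F => x ^ r = γ).card = Fintype.card F - 1 := by
    rw [Finset.sum_erase_add M _ hγM, hsum]
  have h2 : (∑ γ' ∈ M.erase γ, (Finset.univ.filter fun x : F => x ^ r = γ').card)
      ≤ (s - 1) * r := by
    have := Finset.sum_le_card_nsmul (M.erase γ) _ r (fun γ' _ => hfib_le γ')
    rwa [Finset.card_erase_of_mem hγM, hMs, smul_eq_mul] at this
  have h4 : (s-1)*r + r = s*r := by
    have h5 : s - 1 + 1 = s := Nat.succ_pred_eq_of_pos hs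
    calc (s-1)*r + r = ((s-1)+1)*r := by ring
      _ = s*r := by rw [h5]
  have h6 : s * r ≤ (s-1)*r + (Finset.univ.filter fun x : F => x ^ r = γ).card := by
    have e : s * r = (∑ γ' ∈ M.erase γ, (Finset.univ.filter fun x : F => x ^ r = γ').card)
        + (Finset.univ.filter fun x : F => x ^ r = γ).card := by
      rw [mul_comm s r, hrs]; exact h1.symm
    rw [e]
    exact Nat.add_le_add_right h2 _
  rw [← h4] at h6
  exact le_antisymm (hfib_le γ) (Nat.le_of_add_le_add_left h6)

set_option linter.unusedSectionVars false

section MainAux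

variable {F : Type*} [Field F] [Fintype F] [DecidableEq F]

private lemma aux_conj (q : ℕ) (hq7 : 7 ≤ q) (hF : Fintype.card F = q^2)
    (hpow : ∀ a b : F, (a+b)^q = a^q + b^q) (τ x b₀ b₁ b₂ ε : F)
    (h : τ * x^(q+1) * (b₀ + b₁*x + b₂*τ*x^(q+1)) + ε*x^3 = 0) :
    τ^q * x^(q+1) * (b₀^q + b₁^q*x^q + b₂^q*τ^q*x^(q+1)) + ε^q*(x^q)^3 = 0 := by
  have hx2 : x^(q^2) = x := by rw [← hF]; exact FiniteField.pow_card x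
  have hN1 : (x^(q+1))^q = x^(q+1) := by
    rw [← pow_mul, show (q+1)*q = q^2 + q by ring, pow_add, hx2]; ring
  have h3 : (τ * x^(q+1) * (b₀ + b₁*x + b₂*τ*x^(q+1)) + ε*x^3)^q
      = τ^q * x^(q+1) * (b₀^q + b₁^q*x^q + b₂^q*τ^q*x^(q+1)) + ε^q*(x^q)^3 := by
    simp only [hpow, mul_pow]
    rw [hN1]; ring
  rw [← h3, h]
  exact zero_pow (by omega)

private lemma aux_nat1 (q : ℕ) (hq7 : 7 ≤ q) : (q-1)*(q+1) = q^2 - 1 := by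
  obtain ⟨r, rfl⟩ : ∃ r, q = r+1 := ⟨q-1, by omega⟩
  simp only [Nat.add_sub_cancel]
  rw [show (r+1)^2 = r*(r+1+1)+1 by ring, Nat.add_sub_cancel]

private lemma aux_fam (q : ℕ) (hq7 : 7 ≤ q) (hF : Fintype.card F = q^2)
    (τ : F) (hτ0 : τ ≠ 0) (b₁ ε : F) (hb₁ : b₁ ≠ 0)
    (hγ : (-ε*(τ*b₁)⁻¹)^(q+1) = 1) :
    (Finset.univ.filter fun x : F =>
      x ≠ 0 ∧ τ * x^(q+1) * (0 + b₁*x + 0*τ*x^(q+1)) + ε*x^3 = 0).card = q - 1 := by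
  have hτb : τ*b₁ ≠ 0 := mul_ne_zero hτ0 hb₁
  have hγ0 : (-ε*(τ*b₁)⁻¹ : F) ≠ 0 := by
    intro h0
    rw [h0, zero_pow (by omega : q+1 ≠ 0)] at hγ
    exact zero_ne_one hγ
  have hEε : τ*b₁*(-ε*(τ*b₁)⁻¹) = -ε := by field_simp; try ring
  have hfe : q + 1 = (q-1) + 2 := by omega
  have hset : (Finset.univ.filter fun x : F =>
      x ≠ 0 ∧ τ * x^(q+1) * (0 + b₁*x + 0*τ*x^(q+1)) + ε*x^3 = 0)
      = Finset.univ.filter (fun x : F => x^(q-1) = -ε*(τ*b₁)⁻¹) := by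
    ext x
    simp only [Finset.mem_filter, Finset.mem_univ, true_and]
    constructor
    · rintro ⟨hx0, hE⟩
      rw [hfe] at hE
      have h1 : (τ*b₁*x^(q-1) + ε) * x^3 = 0 := by linear_combination hE
      have h2 : τ*b₁*x^(q-1) + ε = 0 :=
        (mul_eq_zero.mp h1).resolve_right (pow_ne_zero _ hx0)
      field_simp
      linear_combination h2
    · intro hxγ
      have hx0 : x ≠ 0 := by
        intro h0
        rw [h0, zero_pow (by omega : q-1 ≠ 0)] at hxγ
        exact hγ0 hxγ.symm
      refine ⟨hx0, ?_⟩
      rw [hfe]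
      linear_combination (τ*b₁*x^3) * hxγ + x^3 * hEε
  rw [hset]
  have h1 : (q-1)*(q+1) = Fintype.card F - 1 := by rw [hF]; exact aux_nat1 q hq7
  exact (aux_fiber (q-1) (q+1) (by omega) (by omega) h1).2 _ hγ

end MainAux

set_option linter.unusedSectionVars false
set_option maxHeartbeats 2000000

section MainAux2

variable {F : Type*} [Field F] [Fintype F] [DecidableEq F]

private lemma aux_main (q : ℕ) (hq7 : 7 ≤ q) (hF : Fintype.card F = q^2)
    (hpow : ∀ a b : F, (a+b)^q = a^q + b^q) (τ : F) (hτ0 : τ ≠ 0)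
    (b₀ b₁ b₂ ε : F) (hne : ¬(b₀ = 0 ∧ b₁ = 0 ∧ b₂ = 0 ∧ ε = 0))
    (hfam : ¬(b₀ = 0 ∧ b₂ = 0 ∧ (-ε*(τ*b₁)⁻¹)^(q+1) = 1)) :
    (Finset.univ.filter fun x : F =>
      x ≠ 0 ∧ τ * x^(q+1) * (b₀ + b₁*x + b₂*τ*x^(q+1)) + ε*x^3 = 0).card ≤ 6 ∨
    (Finset.univ.filter fun x : F =>
      x ≠ 0 ∧ τ * x^(q+1) * (b₀ + b₁*x + b₂*τ*x^(q+1)) + ε*x^3 = 0).card = q + 1 := by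
  have hq0 : q ≠ 0 := by omega
  have hτq : τ^q ≠ 0 := pow_ne_zero _ hτ0
  by_cases hε : ε = 0
  · subst hε
    by_cases hb₂ : b₂ = 0
    · subst hb₂
      by_cases hb₁ : b₁ = 0
      · subst hb₁
        left
        have hb₀ : b₀ ≠ 0 := by tauto
        have hS : (Finset.univ.filter fun x : F =>
            x ≠ 0 ∧ τ * x^(q+1) * (b₀ + 0*x + 0*τ*x^(q+1)) + 0*x^3 = 0) = ∅ := by
          refine Finset.filter_eq_empty_iff.mpr ?_
          rintro x - ⟨hx0, hE⟩
          have hn0 : x^(q+1) ≠ 0 := pow_ne_zero _ hx0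
          have h1 : (τ*x^(q+1))*b₀ = 0 := by linear_combination hE
          rcases mul_eq_zero.mp h1 with h | h
          · exact mul_ne_zero hτ0 hn0 h
          · exact hb₀ h
        rw [hS]; simp
      · left
        have hPne : (C b₁ * X + C b₀ : F[X]) ≠ 0 := by
          intro h
          have := congrArg (fun p => Polynomial.coeff p 1) h
          simp at this
          exact hb₁ this
        refine le_trans (aux_card_le _ (C b₁ * X + C b₀ : F[X]) hPne fun x hx => ?_)
          (by compute_degree <;> norm_num)
        rw [Finset.mem_filter] at hx
        obtain ⟨-, hx0, hE⟩ := hx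
        have hn0 : x^(q+1) ≠ 0 := pow_ne_zero _ hx0
        have h1 : (τ*x^(q+1))*(b₀ + b₁*x) = 0 := by linear_combination hE
        have h2 : b₀ + b₁*x = 0 := (mul_eq_zero.mp h1).resolve_left (mul_ne_zero hτ0 hn0)
        simp only [eval_add, eval_mul, eval_C, eval_X]
        linear_combination h2
    · by_cases hb₁ : b₁ = 0
      · subst hb₁
        by_cases hb₀ : b₀ = 0
        · subst hb₀
          left
          have hS : (Finset.univ.filter fun x : F =>
              x ≠ 0 ∧ τ * x^(q+1) * (0 + 0*x + b₂*τ*x^(q+1)) + 0*x^3 = 0) = ∅ := by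
            refine Finset.filter_eq_empty_iff.mpr ?_
            rintro x - ⟨hx0, hE⟩
            have hn0 : x^(q+1) ≠ 0 := pow_ne_zero _ hx0
            have h1 : ((τ*x^(q+1))*(τ*x^(q+1)))*b₂ = 0 := by linear_combination hE
            rcases mul_eq_zero.mp h1 with h | h
            · rcases mul_eq_zero.mp h with h' | h' <;>
                exact mul_ne_zero hτ0 hn0 h'
            · exact hb₂ h
          rw [hS]; simp
        · have hτb : τ*b₂ ≠ 0 := mul_ne_zero hτ0 hb₂
          have hκ0 : (-b₀*(τ*b₂)⁻¹ : F) ≠ 0 :=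
            mul_ne_zero (neg_ne_zero.2 hb₀) (inv_ne_zero hτb)
          have hEκ : b₂*τ*(-b₀*(τ*b₂)⁻¹) = -b₀ := by field_simp; try ring
          have hset : (Finset.univ.filter fun x : F =>
              x ≠ 0 ∧ τ * x^(q+1) * (b₀ + 0*x + b₂*τ*x^(q+1)) + 0*x^3 = 0)
              = Finset.univ.filter (fun x : F => x^(q+1) = -b₀*(τ*b₂)⁻¹) := by
            ext x
            simp only [Finset.mem_filter, Finset.mem_univ, true_and]
            constructor
            · rintro ⟨hx0, hE⟩
              have hn0 : x^(q+1) ≠ 0 := pow_ne_zero _ hx0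
              have h1 : (τ*x^(q+1))*(b₀ + b₂*τ*x^(q+1)) = 0 := by linear_combination hE
              have h2 : b₀ + b₂*τ*x^(q+1) = 0 :=
                (mul_eq_zero.mp h1).resolve_left (mul_ne_zero hτ0 hn0)
              field_simp
              linear_combination h2
            · intro hxκ
              have hx0 : x ≠ 0 := by
                intro h0
                apply hκ0
                rw [← hxκ, h0, zero_pow (by omega : q+1 ≠ 0)]
              refine ⟨hx0, ?_⟩
              linear_combination (τ*x^(q+1)*b₂*τ)*hxκ + (τ*x^(q+1))*hEκ
          rw [hset]
          have h1 : (q+1)*(q-1) = Fintype.card F - 1 := by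
            rw [hF, mul_comm]; exact aux_nat1 q hq7
          by_cases hκs : (-b₀*(τ*b₂)⁻¹ : F)^(q-1) = 1
          · right
            exact (aux_fiber (q+1) (q-1) (by omega) (by omega) h1).2 _ hκs
          · left
            have hempty : Finset.univ.filter (fun x : F => x^(q+1) = -b₀*(τ*b₂)⁻¹) = ∅ := by
              refine Finset.filter_eq_empty_iff.mpr ?_
              rintro x - hxκ
              have hx0 : x ≠ 0 := by
                intro h0
                apply hκ0
                rw [← hxκ, h0, zero_pow (by omega : q+1 ≠ 0)]
              apply hκs
              rw [← hxκ, ← pow_mul, h1]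
              exact FiniteField.pow_card_sub_one_eq_one x hx0
            rw [hempty]; simp
      · -- ε=0, b₂≠0, b₁≠0: quadratic
        left
        have hPdeg2 : (C (-(b₂^q*τ^q*b₁)) * X^2 + C (τ*b₂*b₀^q - b₂^q*τ^q*b₀ - b₁^q*b₁) * X
            + C (-(b₁^q*b₀)) : F[X]).natDegree = 2 := by
          compute_degree! <;> tauto
        have hPne : (C (-(b₂^q*τ^q*b₁)) * X^2 + C (τ*b₂*b₀^q - b₂^q*τ^q*b₀ - b₁^q*b₁) * X
            + C (-(b₁^q*b₀)) : F[X]) ≠ 0 := by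
          intro h
          rw [h] at hPdeg2
          simp at hPdeg2
        refine le_trans (aux_card_le _ _ hPne fun x hx => ?_) (hPdeg2.le.trans (by norm_num))
        rw [Finset.mem_filter] at hx
        obtain ⟨-, hx0, hE⟩ := hx
        have hn0 : x^(q+1) ≠ 0 := pow_ne_zero _ hx0
        have h1 : (τ*x^(q+1))*(b₀+b₁*x+b₂*τ*x^(q+1)) = 0 := by linear_combination hE
        have h2 : b₀+b₁*x+b₂*τ*x^(q+1) = 0 :=
          (mul_eq_zero.mp h1).resolve_left (mul_ne_zero hτ0 hn0)
        have hφ := aux_conj q hq7 hF hpow τ x b₀ b₁ b₂ 0 hE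
        rw [zero_pow hq0] at hφ
        have h3 : (τ^q*x^(q+1))*(b₀^q+b₁^q*x^q+b₂^q*τ^q*x^(q+1)) = 0 := by
          linear_combination hφ
        have h4 : b₀^q+b₁^q*x^q+b₂^q*τ^q*x^(q+1) = 0 :=
          (mul_eq_zero.mp h3).resolve_left (mul_ne_zero hτq hn0)
        simp only [eval_add, eval_mul, eval_pow, eval_C, eval_X]
        linear_combination (τ*b₂*x)*h4 - (b₁^q + b₂^q*τ^q*x)*h2
  · -- ε ≠ 0
    by_cases hb₂ : b₂ = 0
    · subst hb₂
      by_cases hb₀ : b₀ = 0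
      · subst hb₀
        left
        have hS : (Finset.univ.filter fun x : F =>
            x ≠ 0 ∧ τ * x^(q+1) * (0 + b₁*x + 0*τ*x^(q+1)) + ε*x^3 = 0) = ∅ := by
          refine Finset.filter_eq_empty_iff.mpr ?_
          rintro x - ⟨hx0, hE⟩
          by_cases hb₁ : b₁ = 0
          · subst hb₁
            have h1 : ε*x^3 = 0 := by linear_combination hE
            rcases mul_eq_zero.mp h1 with h | h
            · exact hε h
            · exact pow_ne_zero _ hx0 h
          · apply hfam
            refine ⟨rfl, rfl, ?_⟩
            have hτb : τ*b₁ ≠ 0 := mul_ne_zero hτ0 hb₁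
            have hE2 : (τ*b₁*x^(q-1) + ε)*x^3 = 0 := by
              rw [show q+1 = (q-1)+2 by omega] at hE
              linear_combination hE
            have h2 : τ*b₁*x^(q-1) + ε = 0 :=
              (mul_eq_zero.mp hE2).resolve_right (pow_ne_zero _ hx0)
            have hxγ : x^(q-1) = -ε*(τ*b₁)⁻¹ := by
              field_simp
              linear_combination h2
            rw [← hxγ, ← pow_mul, show (q-1)*(q+1) = Fintype.card F - 1 by
              rw [hF]; exact aux_nat1 q hq7]
            exact FiniteField.pow_card_sub_one_eq_one x hx0
        rw [hS]; simp
      · -- ε ≠ 0, b₂ = 0, b₀ ≠ 0 : cubic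
        left
        have hkey : (τ^q*τ^2*b₀^q*b₀^2 : F) ≠ 0 :=
          mul_ne_zero (mul_ne_zero (mul_ne_zero hτq (pow_ne_zero _ hτ0))
            (pow_ne_zero _ hb₀)) (pow_ne_zero _ hb₀)
        have hPne : (C (τ^q*τ^2*b₀^q*b₀^2) + C (2*(τ^q*τ^2*b₀^q*b₁*b₀)) * X
            + C (-(τ^q*τ*b₁^q*b₀*ε) + τ^q*τ^2*b₀^q*b₁^2) * X^2
            + C (ε^q*ε^2 - τ^q*τ*b₁^q*b₁*ε) * X^3 : F[X]) ≠ 0 := by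
          intro h
          have h2 := congrArg (Polynomial.eval 0) h
          simp only [eval_add, eval_mul, eval_pow, eval_C, eval_X, eval_zero,
            mul_zero, zero_mul, add_zero, zero_add, zero_pow, ne_eq,
            OfNat.ofNat_ne_zero, not_false_eq_true] at h2
          exact hkey (by linear_combination h2)
        refine le_trans (aux_card_le _ _ hPne fun x hx => ?_) (by compute_degree <;> norm_num)
        rw [Finset.mem_filter] at hx
        obtain ⟨-, hx0, hE⟩ := hx
        have hn0 : x^(q+1) ≠ 0 := pow_ne_zero _ hx0
        have hφ := aux_conj q hq7 hF hpow τ x b₀ b₁ 0 ε hE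
        rw [zero_pow hq0] at hφ
        have h5 : x^(q+1)*(x^3*((τ^q*τ^2*b₀^q*b₀^2) + (2*(τ^q*τ^2*b₀^q*b₁*b₀))*x
            + (-(τ^q*τ*b₁^q*b₀*ε) + τ^q*τ^2*b₀^q*b₁^2)*x^2
            + (ε^q*ε^2 - τ^q*τ*b₁^q*b₁*ε)*x^3)) = 0 := by
          linear_combination (τ^2*(b₁*x+b₀)^2*x^3)*hφ
            + ((-(τ^q*τ*b₁^q*x^2*(b₁*x+b₀)) + ε^q*(ε*x^3 - τ*(b₁*x+b₀)*x^(q+1)))*x^(q+1))*hE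
        have h6 : x^3*((τ^q*τ^2*b₀^q*b₀^2) + (2*(τ^q*τ^2*b₀^q*b₁*b₀))*x
            + (-(τ^q*τ*b₁^q*b₀*ε) + τ^q*τ^2*b₀^q*b₁^2)*x^2
            + (ε^q*ε^2 - τ^q*τ*b₁^q*b₁*ε)*x^3) = 0 :=
          (mul_eq_zero.mp h5).resolve_left hn0
        have h7 := (mul_eq_zero.mp h6).resolve_left (pow_ne_zero _ hx0)
        simp only [eval_add, eval_mul, eval_pow, eval_C, eval_X]
        linear_combination h7
    · -- ε ≠ 0, b₂ ≠ 0 : degree-6 polynomial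
      left
      have hl3 : (τ^2*(τ^q)^2*b₂*b₂^q : F) ≠ 0 :=
        mul_ne_zero (mul_ne_zero (mul_ne_zero (pow_ne_zero _ hτ0) (pow_ne_zero _ hτq)) hb₂)
          (pow_ne_zero _ hb₂)
      have hPdeg : (C (τ^2*b₂*(τ^2*τ^q*b₂*b₀^q - ε^q*ε)^2) * X^3
          + C (τ*(τ^2*τ^q*b₂*b₀^q - ε^q*ε)) * (C b₁ * X + C b₀)
            * (C (ε^q*τ*b₁) * X + C (ε^q*τ*b₀) - C (τ^2*(τ^q)^2*b₂*b₂^q) * X^3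
              - C (τ^2*τ^q*b₂*b₁^q) * X^2)
          + C ε * (C (ε^q*τ*b₁) * X + C (ε^q*τ*b₀) - C (τ^2*(τ^q)^2*b₂*b₂^q) * X^3
              - C (τ^2*τ^q*b₂*b₁^q) * X^2)^2 : F[X]).natDegree = 6 := by
        compute_degree! <;> tauto
      have hPne : (C (τ^2*b₂*(τ^2*τ^q*b₂*b₀^q - ε^q*ε)^2) * X^3
          + C (τ*(τ^2*τ^q*b₂*b₀^q - ε^q*ε)) * (C b₁ * X + C b₀)
            * (C (ε^q*τ*b₁) * X + C (ε^q*τ*b₀) - C (τ^2*(τ^q)^2*b₂*b₂^q) * X^3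
              - C (τ^2*τ^q*b₂*b₁^q) * X^2)
          + C ε * (C (ε^q*τ*b₁) * X + C (ε^q*τ*b₀) - C (τ^2*(τ^q)^2*b₂*b₂^q) * X^3
              - C (τ^2*τ^q*b₂*b₁^q) * X^2)^2 : F[X]) ≠ 0 := by
        intro h
        rw [h] at hPdeg
        simp at hPdeg
      refine le_trans (aux_card_le _ _ hPne fun x hx => ?_) (le_of_eq hPdeg)
      rw [Finset.mem_filter] at hx
      obtain ⟨-, hx0, hE⟩ := hx
      have hn0 : x^(q+1) ≠ 0 := pow_ne_zero _ hx0
      have hφ := aux_conj q hq7 hF hpow τ x b₀ b₁ b₂ ε hE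
      have h1 : x^(q+1)*(x^(q+1)*((ε^q*τ*b₁)*x + (ε^q*τ*b₀) - (τ^2*(τ^q)^2*b₂*b₂^q)*x^3
          - (τ^2*τ^q*b₂*b₁^q)*x^2) - (τ^2*τ^q*b₂*b₀^q - ε^q*ε)*x^3) = 0 := by
        linear_combination (ε^q*x^(q+1))*hE - (τ^2*b₂*x^3)*hφ
      have hnL : x^(q+1)*((ε^q*τ*b₁)*x + (ε^q*τ*b₀) - (τ^2*(τ^q)^2*b₂*b₂^q)*x^3
          - (τ^2*τ^q*b₂*b₁^q)*x^2) = (τ^2*τ^q*b₂*b₀^q - ε^q*ε)*x^3 :=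
        sub_eq_zero.mp ((mul_eq_zero.mp h1).resolve_left hn0)
      have h4 : x^3*(τ^2*b₂*(τ^2*τ^q*b₂*b₀^q - ε^q*ε)^2*x^3
          + τ*(τ^2*τ^q*b₂*b₀^q - ε^q*ε)*(b₁*x+b₀)*((ε^q*τ*b₁)*x + (ε^q*τ*b₀)
            - (τ^2*(τ^q)^2*b₂*b₂^q)*x^3 - (τ^2*τ^q*b₂*b₁^q)*x^2)
          + ε*((ε^q*τ*b₁)*x + (ε^q*τ*b₀) - (τ^2*(τ^q)^2*b₂*b₂^q)*x^3
            - (τ^2*τ^q*b₂*b₁^q)*x^2)^2) = 0 := by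
        linear_combination (((ε^q*τ*b₁)*x + (ε^q*τ*b₀) - (τ^2*(τ^q)^2*b₂*b₂^q)*x^3
            - (τ^2*τ^q*b₂*b₁^q)*x^2)^2)*hE
          - (τ^2*b₂*(x^(q+1)*((ε^q*τ*b₁)*x + (ε^q*τ*b₀) - (τ^2*(τ^q)^2*b₂*b₂^q)*x^3
              - (τ^2*τ^q*b₂*b₁^q)*x^2) + (τ^2*τ^q*b₂*b₀^q - ε^q*ε)*x^3)
            + τ*(b₁*x+b₀)*((ε^q*τ*b₁)*x + (ε^q*τ*b₀) - (τ^2*(τ^q)^2*b₂*b₂^q)*x^3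
              - (τ^2*τ^q*b₂*b₁^q)*x^2))*hnL
      have h5 := (mul_eq_zero.mp h4).resolve_left (pow_ne_zero _ hx0)
      simp only [eval_add, eval_sub, eval_mul, eval_pow, eval_C, eval_X]
      linear_combination h5

end MainAux2


set_option maxHeartbeats 1000000 in
/-- Let `τ^q + τ = 1`. If `q ≥ 7`, then no nonzero tuple `(b₀, b₁, b₂, ε)`
satisfies `N(b₀,b₁,b₂,ε) = q`, while some nonzero tuple satisfies `N = q − 1`; hence the
second minimum weight of the `m = 3` code `C_𝓛(𝙳,𝙶)` equals `q² − q`. If moreover `q ≥ 8`,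
the number of nonzero tuples with `N = q − 1` is exactly `(q+1)(q²−1)`. -/
theorem stmt_19 (q : ℕ) (hq : IsPrimePow q) (hq7 : 7 ≤ q)
    (F : Type*) [Field F] [Fintype F] [DecidableEq F] (hF : Fintype.card F = q ^ 2)
    (τ : F) (hτ : τ ^ q + τ = 1)
    (N : F → F → F → F → ℕ)
    (hN : ∀ b₀ b₁ b₂ ε : F, N b₀ b₁ b₂ ε =
      (Finset.univ.filter fun x : F => x ≠ 0 ∧
        τ * x ^ (q + 1) * (b₀ + b₁ * x + b₂ * τ * x ^ (q + 1)) + ε * x ^ 3 = 0).card) :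
    (∀ b₀ b₁ b₂ ε : F, (b₀, b₁, b₂, ε) ≠ (0, 0, 0, 0) → N b₀ b₁ b₂ ε ≠ q) ∧
    (∃ b₀ b₁ b₂ ε : F, (b₀, b₁, b₂, ε) ≠ (0, 0, 0, 0) ∧ N b₀ b₁ b₂ ε = q - 1) ∧
    (8 ≤ q →
      (Finset.univ.filter fun p : F × F × F × F =>
          p ≠ (0, 0, 0, 0) ∧ N p.1 p.2.1 p.2.2.1 p.2.2.2 = q - 1).card
        = (q + 1) * (q ^ 2 - 1)) := by

  classical
  -- characteristic setup
  obtain ⟨p, k, hpp, hk, hpk⟩ := hq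
  have hp : p.Prime := hpp.nat_prime
  have hchar0 : CharP F (ringChar F) := ringChar.charP F
  obtain ⟨n, hrp, hcard2⟩ := FiniteField.card F (ringChar F)
  have hcp : ringChar F = p := by
    have hpow2 : (ringChar F) ^ (n : ℕ) = p ^ (2*k) := by
      rw [← hcard2, hF, ← hpk]; ring
    have hdvd : ringChar F ∣ p ^ (2*k) := by
      rw [← hpow2]
      exact dvd_pow_self _ (by positivity)
    exact (Nat.prime_dvd_prime_iff_eq hrp hp).mp (hrp.dvd_of_dvd_pow hdvd)
  haveI : CharP F p := hcp ▸ hchar0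
  haveI : Fact p.Prime := ⟨hp⟩
  have hpow : ∀ a b : F, (a+b)^q = a^q + b^q := by
    intro a b
    rw [← hpk]
    exact add_pow_char_pow a b p k
  have hτ0 : τ ≠ 0 := by
    intro h0
    rw [h0, zero_pow (by omega : q ≠ 0), add_zero] at hτ
    exact zero_ne_one hτ
  have hb1ne : ∀ (b₁ ε : F), (-ε*(τ*b₁)⁻¹)^(q+1) = 1 → b₁ ≠ 0 := by
    intro b₁ ε hγ h0
    rw [h0, mul_zero, inv_zero, mul_zero, zero_pow (by omega : q+1 ≠ 0)] at hγ
    exact zero_ne_one hγ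
  refine ⟨?_, ?_, ?_⟩
  · -- no tuple with N = q
    intro b₀ b₁ b₂ ε hne hNq
    rw [hN] at hNq
    have hne' : ¬(b₀ = 0 ∧ b₁ = 0 ∧ b₂ = 0 ∧ ε = 0) := by
      rintro ⟨h1, h2, h3, h4⟩
      exact hne (by rw [h1, h2, h3, h4])
    by_cases hfam : b₀ = 0 ∧ b₂ = 0 ∧ (-ε*(τ*b₁)⁻¹)^(q+1) = 1
    · obtain ⟨h0, h2, hγ⟩ := hfam
      have hb₁ := hb1ne b₁ ε hγ
      subst h0; subst h2
      rw [aux_fam q hq7 hF τ hτ0 b₁ ε hb₁ hγ] at hNq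
      omega
    · rcases aux_main q hq7 hF hpow τ hτ0 b₀ b₁ b₂ ε hne' hfam with h | h <;>
        rw [hNq] at h <;> omega
  · -- existence of N = q - 1
    refine ⟨0, 1, 0, -τ, ?_, ?_⟩
    · intro h
      have := congrArg (fun z : F × F × F × F => z.2.1) h
      simp at this
    · rw [hN]
      have hγ : (-(-τ)*(τ*(1:F))⁻¹)^(q+1) = 1 := by
        rw [mul_one, neg_neg, mul_inv_cancel₀ hτ0, one_pow]
      exact aux_fam q hq7 hF τ hτ0 1 (-τ) one_ne_zero hγ
  · -- count for q ≥ 8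
    intro hq8
    have hsetEq : (Finset.univ.filter fun p : F × F × F × F =>
        p ≠ (0, 0, 0, 0) ∧ N p.1 p.2.1 p.2.2.1 p.2.2.2 = q - 1)
        = Finset.univ.filter fun p : F × F × F × F =>
          p.1 = 0 ∧ p.2.2.1 = 0 ∧ p.2.1 ≠ 0 ∧ (-p.2.2.2*(τ*p.2.1)⁻¹)^(q+1) = 1 := by
      ext ⟨b₀, b₁, b₂, ε⟩
      simp only [Finset.mem_filter, Finset.mem_univ, true_and]
      constructor
      · rintro ⟨hne, hNv⟩
        rw [hN] at hNv
        have hne' : ¬(b₀ = 0 ∧ b₁ = 0 ∧ b₂ = 0 ∧ ε = 0) := by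
          rintro ⟨h1, h2, h3, h4⟩
          exact hne (by rw [h1, h2, h3, h4])
        by_cases hfam : b₀ = 0 ∧ b₂ = 0 ∧ (-ε*(τ*b₁)⁻¹)^(q+1) = 1
        · obtain ⟨h0, h2, hγ⟩ := hfam
          exact ⟨h0, h2, hb1ne b₁ ε hγ, hγ⟩
        · exfalso
          rcases aux_main q hq7 hF hpow τ hτ0 b₀ b₁ b₂ ε hne' hfam with h | h <;>
            rw [hNv] at h <;> omega
      · rintro ⟨h0, h2, hb₁, hγ⟩
        subst h0; subst h2
        constructor
        · intro h
          have := congrArg (fun z : F × F × F × F => z.2.1) h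
          simp at this
          exact hb₁ this
        · rw [hN]
          exact aux_fam q hq7 hF τ hτ0 b₁ ε hb₁ hγ
    rw [hsetEq]
    have hMcard : (Finset.univ.filter fun u : F => u^(q+1) = 1).card = q + 1 := by
      have h1 : (q-1)*(q+1) = Fintype.card F - 1 := by rw [hF]; exact aux_nat1 q hq7
      exact (aux_fiber (q-1) (q+1) (by omega) (by omega) h1).1
    have hBcard : (Finset.univ.filter fun b : F => b ≠ 0).card = q^2 - 1 := by
      rw [Finset.filter_ne' Finset.univ (0:F),
        Finset.card_erase_of_mem (Finset.mem_univ 0), Finset.card_univ, hF]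
    have hbij : (Finset.univ.filter fun p : F × F × F × F =>
          p.1 = 0 ∧ p.2.2.1 = 0 ∧ p.2.1 ≠ 0 ∧ (-p.2.2.2*(τ*p.2.1)⁻¹)^(q+1) = 1).card
        = ((Finset.univ.filter fun u : F => u^(q+1) = 1) ×ˢ
            (Finset.univ.filter fun b : F => b ≠ 0)).card := by
      refine Finset.card_bij' (fun p _ => (-p.2.2.2*(τ*p.2.1)⁻¹, p.2.1))
        (fun z _ => (0, z.2, 0, -(τ*z.2*z.1))) ?_ ?_ ?_ ?_
      · rintro ⟨b₀, b₁, b₂, ε⟩ hp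
        simp only [Finset.mem_filter, Finset.mem_univ, true_and] at hp
        obtain ⟨h0, h2, hb₁, hγ⟩ := hp
        simp only [Finset.mem_product, Finset.mem_filter, Finset.mem_univ, true_and]
        exact ⟨hγ, hb₁⟩
      · rintro ⟨u, b⟩ hz
        simp only [Finset.mem_product, Finset.mem_filter, Finset.mem_univ, true_and] at hz
        obtain ⟨hu, hb⟩ := hz
        rw [Finset.mem_filter]
        refine ⟨Finset.mem_univ _, rfl, rfl, hb, ?_⟩
        have he : -(-(τ*b*u))*(τ*b)⁻¹ = u := by
          rw [neg_neg]
          field_simp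
          try ring
        rw [he]
        exact hu
      · rintro ⟨b₀, b₁, b₂, ε⟩ hp
        simp only [Finset.mem_filter, Finset.mem_univ, true_and] at hp
        obtain ⟨h0, h2, hb₁, hγ⟩ := hp
        subst h0; subst h2
        have he : -(τ*b₁*(-ε*(τ*b₁)⁻¹)) = ε := by
          field_simp
        simp only [he]
      · rintro ⟨u, b⟩ hz
        simp only [Finset.mem_product, Finset.mem_filter, Finset.mem_univ, true_and] at hz
        obtain ⟨hu, hb⟩ := hz
        have he : -(-(τ*b*u))*(τ*b)⁻¹ = u := by
          rw [neg_neg]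
          field_simp
          try ring
        simp only [he]
    rw [hbij, Finset.card_product, hMcard, hBcard]
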